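/- (Hamilton–Jacobi Theorem, Hamiltonian version.) Let Z be a solution of the Hamilton equations and γ a closed section, and assume the projected k-vector field Z^γ on ℝ^n, with components (Z^γ_A)^i = Z_A^i ∘ γ̃ = (∂H/∂p^A_i) ∘ γ̃, is integrable. Then the following are equivalent: (i) for every integral section σ of Z^γ, the map γ̃ ∘ σ = (σ, γ ∘ σ) satisfies the Hamilton field equations; (ii) d(H ∘ γ̃) = 0, i.e., the derivative of the function H ∘ γ̃ : ℝ^n → ℝ vanishes identically. -/

import Mathlib

open scoped BigOperators

noncomputable section

/-- The phase space `P = ℝ^n × M`, `M = (Fin k → Fin n → ℝ)`. -/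
abbrev Phase (n k : ℕ) := (Fin n → ℝ) × (Fin k → Fin n → ℝ)

/-- The canonical presymplectic 2-form `ω^A` on `ℝ^n × M`:
`ω^A((u,P),(u',P')) = Σ_i (u^i (P')^A_i − (u')^i P^A_i)`. -/
def omegaK {n k : ℕ} (A : Fin k) (z z' : Phase n k) : ℝ :=
  ∑ i, (z.1 i * z'.2 A i - z'.1 i * z.2 A i)

/-- `∂H/∂q^i` at `z`. -/
def Hq {n k : ℕ} (H : Phase n k → ℝ) (z : Phase n k) (i : Fin n) : ℝ :=
  fderiv ℝ H z (Pi.single i 1, 0)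

/-- `∂H/∂p^A_i` at `z`. -/
def Hp {n k : ℕ} (H : Phase n k → ℝ) (z : Phase n k) (A : Fin k) (i : Fin n) : ℝ :=
  fderiv ℝ H z (0, Pi.single A (Pi.single i 1))

/-- A `k`-vector field `Z` is a solution of the Hamilton equations `♭(Z) = dH`:
`Z_A^i = ∂H/∂p^A_i` and `Σ_A (Z_A)^A_i = −∂H/∂q^i` hold on `P`. -/
def HamEqs {n k : ℕ} (H : Phase n k → ℝ) (Z : Fin k → Phase n k → Phase n k) : Prop :=
  ∀ z, (∀ A i, (Z A z).1 i = Hp H z A i) ∧ (∀ i, ∑ A, (Z A z).2 A i = - Hq H z i)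

/-- `(σ, π) : U → P` satisfies the Hamilton field equations:
`∂σ^i/∂t^A = (∂H/∂p^A_i) ∘ (σ,π)` and `Σ_A ∂π^A_i/∂t^A = −(∂H/∂q^i) ∘ (σ,π)` on `U`. -/
def HamFieldEqs {n k : ℕ} (H : Phase n k → ℝ) (U : Set (Fin k → ℝ))
    (σ : (Fin k → ℝ) → Phase n k) : Prop :=
  ∀ t ∈ U,
    (∀ (A : Fin k) (i : Fin n),
      fderiv ℝ (fun s => (σ s).1 i) t (Pi.single A 1) = Hp H (σ t) A i) ∧
    (∀ i : Fin n,
      ∑ A, fderiv ℝ (fun s => (σ s).2 A i) t (Pi.single A 1) = - Hq H (σ t) i)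

/-- A closed section `γ : Q → (T^1_k)^*Q`: a smooth map `γ : ℝ^n → M` with
`∂γ^A_i/∂q^j = ∂γ^A_j/∂q^i`. -/
def ClosedSection {n k : ℕ} (γ : (Fin n → ℝ) → (Fin k → Fin n → ℝ)) : Prop :=
  ContDiff ℝ (⊤ : ℕ∞) γ ∧
  ∀ (q : Fin n → ℝ) (A : Fin k) (i j : Fin n),
    fderiv ℝ (fun q => γ q A i) q (Pi.single j 1) =
      fderiv ℝ (fun q => γ q A j) q (Pi.single i 1)

/-- An integral section of a `k`-vector field `X` on `ℝ^n`: a `C¹` map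
`σ : U → ℝ^n` on an open set `U ⊆ ℝ^k` with `∂σ^i/∂t^A = X_A^i ∘ σ` on `U`. -/
def IsIntegralSection {n k : ℕ} (X : Fin k → (Fin n → ℝ) → (Fin n → ℝ))
    (U : Set (Fin k → ℝ)) (σ : (Fin k → ℝ) → (Fin n → ℝ)) : Prop :=
  IsOpen U ∧ ContDiffOn ℝ 1 σ U ∧
    ∀ t ∈ U, ∀ A, fderiv ℝ σ t (Pi.single A 1) = X A (σ t)

/-- `X` is integrable: an integral section passes through every point of `ℝ^n`. -/
def Integrable {n k : ℕ} (X : Fin k → (Fin n → ℝ) → (Fin n → ℝ)) : Prop :=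
  ∀ q₀ : Fin n → ℝ, ∃ (U : Set (Fin k → ℝ)) (σ : (Fin k → ℝ) → (Fin n → ℝ)),
    IsIntegralSection X U σ ∧ (0 : Fin k → ℝ) ∈ U ∧ σ 0 = q₀


section HJAux
variable {n k : ℕ}

lemma sum_single_eq (u : Fin n → ℝ) : ∑ i, u i • (Pi.single i (1:ℝ) : Fin n → ℝ) = u := by
  funext m
  simp [Finset.sum_apply, Pi.single_apply]

lemma sum_single2_eq (v : Fin k → Fin n → ℝ) :
    ∑ A, ∑ j, v A j • (Pi.single A (Pi.single j (1:ℝ)) : Fin k → Fin n → ℝ) = v := by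
  funext B m
  simp [Finset.sum_apply, Pi.single_apply, apply_ite (fun f : Fin n → ℝ => f m)]

lemma clm_decomp1 (L : (Fin n → ℝ) →L[ℝ] ℝ) (u : Fin n → ℝ) :
    L u = ∑ j, u j * L (Pi.single j 1) := by
  conv_lhs => rw [← sum_single_eq u]
  simp [map_sum]

lemma clm_decomp (L : ((Fin n → ℝ) × (Fin k → Fin n → ℝ)) →L[ℝ] ℝ)
    (u : Fin n → ℝ) (v : Fin k → Fin n → ℝ) :
    L (u, v) = (∑ i, u i * L (Pi.single i 1, 0))
      + ∑ A, ∑ j, v A j * L (0, Pi.single A (Pi.single j 1)) := by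
  have h1 : ((u, v) : (Fin n → ℝ) × (Fin k → Fin n → ℝ)) = (u, 0) + (0, v) := by simp
  have h2 : (∑ i, u i • ((Pi.single i 1, 0) : (Fin n → ℝ) × (Fin k → Fin n → ℝ)))
      = ((u, 0) : (Fin n → ℝ) × (Fin k → Fin n → ℝ)) := by
    apply Prod.ext
    · rw [Prod.fst_sum]; simp only [Prod.smul_fst]; exact sum_single_eq u
    · simp only [Prod.snd_sum, Prod.smul_snd, smul_zero, Finset.sum_const_zero]
  have h3 : (∑ A, ∑ j, v A j • ((0, Pi.single A (Pi.single j 1)) : (Fin n → ℝ) × (Fin k → Fin n → ℝ)))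
      = ((0, v) : (Fin n → ℝ) × (Fin k → Fin n → ℝ)) := by
    apply Prod.ext
    · simp only [Prod.fst_sum, Prod.smul_fst, smul_zero, Finset.sum_const_zero]
    · simp only [Prod.snd_sum, Prod.smul_snd]; exact sum_single2_eq v
  have e1 : ∀ (c : ℝ) (a : Fin n → ℝ),
      ((c • a, 0) : (Fin n → ℝ) × (Fin k → Fin n → ℝ)) = c • (a, 0) := by
    intro c a; simp [Prod.smul_mk]
  have e2 : ∀ (c : ℝ) (b : Fin k → Fin n → ℝ),
      ((0, c • b) : (Fin n → ℝ) × (Fin k → Fin n → ℝ)) = c • (0, b) := by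
    intro c b; simp [Prod.smul_mk]
  rw [h1, map_add, ← h2, ← h3, map_sum, map_sum]
  simp only [map_sum, map_smul, smul_eq_mul]


lemma fderiv_eval1 {σ : (Fin k → ℝ) → (Fin n → ℝ)} {t : Fin k → ℝ}
    (hσ : DifferentiableAt ℝ σ t) (i : Fin n) (w : Fin k → ℝ) :
    fderiv ℝ (fun s => σ s i) t w = fderiv ℝ σ t w i := by
  have hπ := ((ContinuousLinearMap.proj (R := ℝ) (φ := fun _ : Fin n => ℝ) i).hasFDerivAt
    (x := σ t)).comp t hσ.hasFDerivAt
  rw [show (fun s => σ s i)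
      = (⇑(ContinuousLinearMap.proj (R := ℝ) (φ := fun _ : Fin n => ℝ) i)) ∘ σ from rfl,
    hπ.fderiv]
  rfl

lemma fderiv_eval2 {γ : (Fin n → ℝ) → (Fin k → Fin n → ℝ)} {q : Fin n → ℝ}
    (hγ : DifferentiableAt ℝ γ q) (A : Fin k) (j : Fin n) (w : Fin n → ℝ) :
    fderiv ℝ (fun q => γ q A j) q w = fderiv ℝ γ q w A j := by
  have hπ := (((ContinuousLinearMap.proj (R := ℝ) (φ := fun _ : Fin n => ℝ) j).comp
      (ContinuousLinearMap.proj (R := ℝ) (φ := fun _ : Fin k => Fin n → ℝ) A)).hasFDerivAt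
    (x := γ q)).comp q hγ.hasFDerivAt
  rw [show (fun q => γ q A j)
      = (⇑((ContinuousLinearMap.proj (R := ℝ) (φ := fun _ : Fin n => ℝ) j).comp
          (ContinuousLinearMap.proj (R := ℝ) (φ := fun _ : Fin k => Fin n → ℝ) A))) ∘ γ
      from rfl,
    hπ.fderiv]
  rfl

lemma fderiv_graph (H : Phase n k → ℝ) (hH : ContDiff ℝ (⊤ : ℕ∞) H)
    (γ : (Fin n → ℝ) → (Fin k → Fin n → ℝ)) (hγ : ContDiff ℝ (⊤ : ℕ∞) γ)
    (q : Fin n → ℝ) (w : Fin n → ℝ) :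
    fderiv ℝ (fun q => H (q, γ q)) q w = fderiv ℝ H (q, γ q) (w, fderiv ℝ γ q w) := by
  have hg : HasFDerivAt (fun q : Fin n → ℝ => ((q, γ q) : Phase n k))
      ((ContinuousLinearMap.id ℝ (Fin n → ℝ)).prod (fderiv ℝ γ q)) q :=
    HasFDerivAt.prodMk (hasFDerivAt_id q) ((hγ.differentiable (by simp) q).hasFDerivAt)
  rw [show (fun q => H (q, γ q)) = H ∘ (fun q : Fin n → ℝ => ((q, γ q) : Phase n k)) from rfl,
    ((hH.differentiable (by simp) (q, γ q)).hasFDerivAt.comp q hg).fderiv]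
  rfl

lemma fderiv_comp_eval {γ : (Fin n → ℝ) → (Fin k → Fin n → ℝ)} (hγ : ContDiff ℝ (⊤ : ℕ∞) γ)
    {σ : (Fin k → ℝ) → (Fin n → ℝ)} {t : Fin k → ℝ}
    (hσ : DifferentiableAt ℝ σ t) (A : Fin k) (i : Fin n) (w : Fin k → ℝ) :
    fderiv ℝ (fun s => γ (σ s) A i) t w
      = ∑ j, fderiv ℝ σ t w j * fderiv ℝ (fun q => γ q A i) (σ t) (Pi.single j 1) := by
  have hf : ContDiff ℝ (⊤ : ℕ∞) (fun q => γ q A i) :=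
    (((ContinuousLinearMap.proj (R := ℝ) (φ := fun _ : Fin n => ℝ) i).comp
      (ContinuousLinearMap.proj (R := ℝ) (φ := fun _ : Fin k => Fin n → ℝ) A)).contDiff).comp hγ
  have h1 : fderiv ℝ (fun s => γ (σ s) A i) t w
      = fderiv ℝ (fun q => γ q A i) (σ t) (fderiv ℝ σ t w) := by
    rw [show (fun s => γ (σ s) A i) = (fun q => γ q A i) ∘ σ from rfl,
      (((hf.differentiable (by simp) (σ t)).hasFDerivAt).comp t hσ.hasFDerivAt).fderiv]
    rfl
  rw [h1, clm_decomp1]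

lemma key_formula (H : Phase n k → ℝ) (hH : ContDiff ℝ (⊤ : ℕ∞) H)
    (γ : (Fin n → ℝ) → (Fin k → Fin n → ℝ)) (hγ : ContDiff ℝ (⊤ : ℕ∞) γ)
    (q : Fin n → ℝ) (i : Fin n) :
    fderiv ℝ (fun q => H (q, γ q)) q (Pi.single i 1)
      = Hq H (q, γ q) i
        + ∑ A, ∑ j, Hp H (q, γ q) A j * fderiv ℝ (fun q => γ q A j) q (Pi.single i 1) := by
  rw [fderiv_graph H hH γ hγ q (Pi.single i 1), clm_decomp]
  congr 1
  · simp [Hq, Pi.single_apply]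
  · refine Finset.sum_congr rfl fun A _ => Finset.sum_congr rfl fun j _ => ?_
    rw [fderiv_eval2 (hγ.differentiable (by simp) q) A j (Pi.single i 1)]
    rw [Hp]
    ring

end HJAux

/-- (Hamilton–Jacobi theorem, Hamiltonian version.) -/
theorem hamilton_jacobi {n k : ℕ}
    (H : Phase n k → ℝ) (hH : ContDiff ℝ (⊤ : ℕ∞) H)
    (Z : Fin k → Phase n k → Phase n k) (hZsm : ∀ A, ContDiff ℝ (⊤ : ℕ∞) (Z A))
    (hZ : HamEqs H Z)
    (γ : (Fin n → ℝ) → (Fin k → Fin n → ℝ)) (hγ : ClosedSection γ)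
    (hInt : Integrable (fun A q => (Z A (q, γ q)).1)) :
    ((∀ U σ, IsIntegralSection (fun A q => (Z A (q, γ q)).1) U σ →
        HamFieldEqs H U (fun t => (σ t, γ (σ t)))) ↔
      (∀ q : Fin n → ℝ, fderiv ℝ (fun q => H (q, γ q)) q = 0)) := by
  obtain ⟨hγs, hγc⟩ := hγ
  constructor
  · intro h1 q₀
    obtain ⟨U, σ, hσ, h0U, hσ0⟩ := hInt q₀
    obtain ⟨hUopen, hσC1, hX⟩ := hσ
    have hdσ : DifferentiableAt ℝ σ 0 :=
      (hσC1.contDiffAt (hUopen.mem_nhds h0U)).differentiableAt one_ne_zero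
    have hfe2 := (h1 U σ ⟨hUopen, hσC1, hX⟩ 0 h0U).2
    have hzero : ∀ i, fderiv ℝ (fun q => H (q, γ q)) q₀ (Pi.single i 1) = 0 := by
      intro i
      have h2i := hfe2 i
      have hL : ∀ A : Fin k,
          fderiv ℝ (fun s => ((σ s, γ (σ s)) : Phase n k).2 A i) 0 (Pi.single A 1)
            = ∑ j, Hp H (q₀, γ q₀) A j *
                fderiv ℝ (fun q => γ q A j) q₀ (Pi.single i 1) := by
        intro A
        rw [show (fun s => ((σ s, γ (σ s)) : Phase n k).2 A i) = fun s => γ (σ s) A i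
            from rfl,
          fderiv_comp_eval hγs hdσ A i, hX 0 h0U A, hσ0]
        refine Finset.sum_congr rfl fun j _ => ?_
        rw [hγc q₀ A i j]
        simp only [(hZ (q₀, γ q₀)).1 A j]
      simp only [hσ0] at h2i
      have hsum : ∑ A, ∑ j, Hp H (q₀, γ q₀) A j *
          fderiv ℝ (fun q => γ q A j) q₀ (Pi.single i 1) = - Hq H (q₀, γ q₀) i := by
        rw [← h2i]
        exact (Finset.sum_congr rfl fun A _ => (hL A).symm)
      rw [key_formula H hH γ hγs q₀ i, hsum]
      ring
    apply ContinuousLinearMap.ext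
    intro w
    rw [ContinuousLinearMap.zero_apply, clm_decomp1]
    simp [hzero]
  · rintro h2 U σ ⟨hUopen, hσC1, hX⟩ t ht
    have hdσ : DifferentiableAt ℝ σ t :=
      (hσC1.contDiffAt (hUopen.mem_nhds ht)).differentiableAt one_ne_zero
    constructor
    · intro A i
      rw [show (fun s => ((σ s, γ (σ s)) : Phase n k).1 i) = fun s => σ s i from rfl,
        fderiv_eval1 hdσ i, hX t ht A]
      exact (hZ (σ t, γ (σ t))).1 A i
    · intro i
      have hterm : ∀ A : Fin k,
          fderiv ℝ (fun s => ((σ s, γ (σ s)) : Phase n k).2 A i) t (Pi.single A 1)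
            = ∑ j, Hp H (σ t, γ (σ t)) A j *
                fderiv ℝ (fun q => γ q A j) (σ t) (Pi.single i 1) := by
        intro A
        rw [show (fun s => ((σ s, γ (σ s)) : Phase n k).2 A i) = fun s => γ (σ s) A i
            from rfl,
          fderiv_comp_eval hγs hdσ A i, hX t ht A]
        refine Finset.sum_congr rfl fun j _ => ?_
        rw [hγc (σ t) A i j]
        simp only [(hZ (σ t, γ (σ t))).1 A j]
      have hk := key_formula H hH γ hγs (σ t) i
      rw [h2 (σ t)] at hk
      simp only [ContinuousLinearMap.zero_apply] at hk
      calc ∑ A, fderiv ℝ (fun s => ((σ s, γ (σ s)) : Phase n k).2 A i) t (Pi.single A 1)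
          = ∑ A, ∑ j, Hp H (σ t, γ (σ t)) A j *
              fderiv ℝ (fun q => γ q A j) (σ t) (Pi.single i 1) :=
            Finset.sum_congr rfl fun A _ => hterm A
        _ = - Hq H (σ t, γ (σ t)) i := by linarith
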